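/- Every even separable state ω on A(I ∪ J) (for disjoint I, J) admits a separable decomposition ω = Σᵢ λᵢ ω₁ᵢ ∘ ω₂ᵢ in which all marginal states ω₁ᵢ on A(I) and ω₂ᵢ on A(J) are even. -/
import Mathlib


open scoped ComplexOrder

/-- The canonical anticommutation relations for a family of annihilation operators. -/
def IsCAR {A : Type*} [Ring A] [StarRing A] {ι : Type*} [DecidableEq ι] (a : ι → A) : Prop :=
  (∀ i j, star (a i) * a j + a j * star (a i) = if i = j then (1 : A) else 0) ∧
  (∀ i j, star (a i) * star (a j) + star (a j) * star (a i) = 0) ∧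
  (∀ i j, a i * a j + a j * a i = 0)

/-- A state: a normalized positive linear functional. -/
def IsState {A : Type*} [Ring A] [StarRing A] [Algebra ℂ A] (φ : A → ℂ) : Prop :=
  (∀ x y, φ (x + y) = φ x + φ y) ∧ (∀ (c : ℂ) (x : A), φ (c • x) = c * φ x) ∧
  φ 1 = 1 ∧ ∀ x, 0 ≤ φ (star x * x)

/-- Separability of a state `ω` for a pair of subsets `S`, `T` of the algebra: `ω` agrees on
products with a convex combination of product states. -/
def IsSeparableState {A : Type*} [Ring A] [StarRing A] [Algebra ℂ A]
    (ω : A → ℂ) (S T : Set A) : Prop :=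
  ∃ (n : ℕ) (lam : Fin n → ℝ) (φ : Fin n → (A → ℂ)),
    (∀ i, 0 < lam i) ∧ (∑ i, lam i = 1) ∧
    (∀ i, IsState (φ i)) ∧
    (∀ i, ∀ x ∈ S, ∀ y ∈ T, φ i (x * y) = φ i x * φ i y) ∧
    (∀ x ∈ S, ∀ y ∈ T, ω (x * y) = ∑ i, (lam i : ℂ) * φ i (x * y))

set_option linter.unusedSectionVars false

section Aux
variable {A : Type*} [Ring A] [StarRing A] [Algebra ℂ A] [StarModule ℂ A]
variable {ι : Type*} [DecidableEq ι] {a : ι → A} {Θ : A ≃⋆ₐ[ℂ] A}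

lemma theta_mem (hΘ : ∀ i, Θ (a i) = - a i) {s : Set ι} {x : A}
    (hx : x ∈ StarAlgebra.adjoin ℂ (a '' s)) : Θ x ∈ StarAlgebra.adjoin ℂ (a '' s) := by
  induction hx using StarAlgebra.adjoin_induction with
  | mem z hz =>
    obtain ⟨i, hi, rfl⟩ := hz
    rw [hΘ]
    exact neg_mem (StarAlgebra.subset_adjoin ℂ _ ⟨i, hi, rfl⟩)
  | algebraMap r => rw [Algebra.algebraMap_eq_smul_one, map_smul, map_one,
      ← Algebra.algebraMap_eq_smul_one]; exact algebraMap_mem _ r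
  | add x y hx hy ihx ihy => rw [map_add]; exact add_mem ihx ihy
  | mul x y hx hy ihx ihy => rw [map_mul]; exact mul_mem ihx ihy
  | star x hx ihx => rw [map_star]; exact star_mem ihx

lemma theta_sq (hΘ : ∀ i, Θ (a i) = - a i) {s : Set ι} {x : A}
    (hx : x ∈ StarAlgebra.adjoin ℂ (a '' s)) : Θ (Θ x) = x := by
  induction hx using StarAlgebra.adjoin_induction with
  | mem z hz => obtain ⟨i, hi, rfl⟩ := hz; rw [hΘ, map_neg, hΘ, neg_neg]
  | algebraMap r => rw [Algebra.algebraMap_eq_smul_one, map_smul, map_one, map_smul, map_one]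
  | add x y hx hy ihx ihy => rw [map_add, map_add, ihx, ihy]
  | mul x y hx hy ihx ihy => rw [map_mul, map_mul, ihx, ihy]
  | star x hx ihx => rw [map_star, map_star, ihx]

/-- Inner anticommutation: generators over `J` graded-commute with everything in the
`I`-subalgebra. -/
lemma gen_graded_comm (hCAR : IsCAR a) (hΘ : ∀ i, Θ (a i) = - a i) {s : Set ι} {j : ι}
    (hj : j ∉ s) {x : A} (hx : x ∈ StarAlgebra.adjoin ℂ (a '' s)) :
    x * a j = a j * Θ x ∧ a j * x = Θ x * a j ∧
      x * star (a j) = star (a j) * Θ x ∧ star (a j) * x = Θ x * star (a j) := by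
  induction hx using StarAlgebra.adjoin_induction with
  | mem z hz =>
    obtain ⟨i, hi, rfl⟩ := hz
    have hij : i ≠ j := fun h => hj (h ▸ hi)
    have h1 : a i * a j + a j * a i = 0 := hCAR.2.2 i j
    have h2 : a j * a i + a i * a j = 0 := hCAR.2.2 j i
    have h3 : star (a j) * a i + a i * star (a j) = 0 := by
      simpa [hij.symm] using hCAR.1 j i
    refine ⟨?_, ?_, ?_, ?_⟩ <;> rw [hΘ]
    · rw [mul_neg]; exact eq_neg_of_add_eq_zero_left h1
    · rw [neg_mul]; exact eq_neg_of_add_eq_zero_left h2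
    · rw [mul_neg]; exact eq_neg_of_add_eq_zero_left (by linear_combination (norm := abel) h3)
    · rw [neg_mul]; exact eq_neg_of_add_eq_zero_left h3
  | algebraMap r =>
    have hc : Θ (algebraMap ℂ A r) = algebraMap ℂ A r := by
      rw [Algebra.algebraMap_eq_smul_one, map_smul, map_one]
    refine ⟨?_, ?_, ?_, ?_⟩ <;> rw [hc]
    · exact Algebra.commutes r (a j)
    · exact (Algebra.commutes r (a j)).symm
    · exact Algebra.commutes r (star (a j))
    · exact (Algebra.commutes r (star (a j))).symm
  | add x y hx hy ihx ihy =>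
    refine ⟨?_, ?_, ?_, ?_⟩ <;> rw [map_add]
    · rw [add_mul, mul_add, ihx.1, ihy.1]
    · rw [mul_add, add_mul, ihx.2.1, ihy.2.1]
    · rw [add_mul, mul_add, ihx.2.2.1, ihy.2.2.1]
    · rw [mul_add, add_mul, ihx.2.2.2, ihy.2.2.2]
  | mul x y hx hy ihx ihy =>
    refine ⟨?_, ?_, ?_, ?_⟩ <;> rw [map_mul]
    · rw [mul_assoc, ihy.1, ← mul_assoc, ihx.1, mul_assoc]
    · rw [← mul_assoc, ihx.2.1, mul_assoc, ihy.2.1, ← mul_assoc]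
    · rw [mul_assoc, ihy.2.2.1, ← mul_assoc, ihx.2.2.1, mul_assoc]
    · rw [← mul_assoc, ihx.2.2.2, mul_assoc, ihy.2.2.2, ← mul_assoc]
  | star x hx ihx =>
    have e1 := congrArg star ihx.1
    have e2 := congrArg star ihx.2.1
    have e3 := congrArg star ihx.2.2.1
    have e4 := congrArg star ihx.2.2.2
    simp only [star_mul, star_star] at e1 e2 e3 e4
    rw [map_star]
    exact ⟨e4, e3, e2, e1⟩

end Aux

lemma two_mul_cancel {A : Type*} [Ring A] [Algebra ℂ A] {u v : A} (h : 2 * u = 2 * v) :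
    u = v := by
  have e : ∀ w : A, (2:A) * w = (2:ℂ) • w := fun w => by rw [Algebra.smul_def, map_ofNat]
  have h2 : (2:ℂ) • u = (2:ℂ) • v := by rw [← e, ← e, h]
  calc u = (2⁻¹:ℂ) • ((2:ℂ) • u) := (inv_smul_smul₀ two_ne_zero u).symm
    _ = (2⁻¹:ℂ) • ((2:ℂ) • v) := by rw [h2]
    _ = v := inv_smul_smul₀ two_ne_zero v

section Aux2
variable {A : Type*} [Ring A] [StarRing A] [Algebra ℂ A] [StarModule ℂ A]
variable {ι : Type*} [DecidableEq ι] {a : ι → A} {Θ : A ≃⋆ₐ[ℂ] A}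

/-- Graded commutation between the two subalgebras. -/
lemma graded_comm (hCAR : IsCAR a) (hΘ : ∀ i, Θ (a i) = - a i) {I J : Set ι}
    (hdisj : Disjoint I J) {y : A} (hy : y ∈ StarAlgebra.adjoin ℂ (a '' J)) :
    ∀ x ∈ StarAlgebra.adjoin ℂ (a '' I),
      (2 * (x * y) = y * x + y * Θ x + Θ y * x - Θ y * Θ x) ∧
      (2 * (y * x) = x * y + Θ x * y + x * Θ y - Θ x * Θ y) := by
  induction hy using StarAlgebra.adjoin_induction with
  | mem z hz =>
    obtain ⟨j, hj, rfl⟩ := hz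
    intro x hx
    have hjI : j ∉ I := fun h => Set.disjoint_left.mp hdisj h hj
    obtain ⟨k1, k2, -, -⟩ := gen_graded_comm hCAR hΘ hjI hx
    constructor
    · rw [hΘ j, k1]; noncomm_ring
    · rw [hΘ j, k2]; noncomm_ring
  | algebraMap r =>
    intro x hx
    have hc : Θ (algebraMap ℂ A r) = algebraMap ℂ A r := by
      rw [Algebra.algebraMap_eq_smul_one, map_smul, map_one]
    constructor
    · rw [hc, ← Algebra.commutes r x]; noncomm_ring
    · rw [hc, ← Algebra.commutes r x, ← Algebra.commutes r (Θ x)]; noncomm_ring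
  | add y z hy hz ihy ihz =>
    intro x hx
    have h1 := (ihy x hx).1; have h2 := (ihz x hx).1
    have h3 := (ihy x hx).2; have h4 := (ihz x hx).2
    constructor
    · rw [map_add]
      calc 2 * (x * (y + z)) = 2 * (x * y) + 2 * (x * z) := by noncomm_ring
        _ = _ := by rw [h1, h2]; noncomm_ring
    · rw [map_add]
      calc 2 * ((y + z) * x) = 2 * (y * x) + 2 * (z * x) := by noncomm_ring
        _ = _ := by rw [h3, h4]; noncomm_ring
  | mul y z hy hz ihy ihz =>
    intro x hx
    have hΘx : Θ x ∈ StarAlgebra.adjoin ℂ (a '' I) := theta_mem hΘ hx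
    have hθθ : Θ (Θ x) = x := theta_sq hΘ hx
    have hxy := (ihy x hx).1
    have hxz := (ihz x hx).1
    have hΘxz := (ihz (Θ x) hΘx).1
    rw [hθθ] at hΘxz
    have hyx := (ihy x hx).2
    have hzx := (ihz x hx).2
    have hΘzx := (ihy (Θ x) hΘx).2
    rw [hθθ] at hΘzx
    constructor
    · apply two_mul_cancel
      calc 2 * (2 * (x * (y * z))) = (2 * (x * y)) * z + (2 * (x * y)) * z := by noncomm_ring
        _ = y * (2 * (x * z)) + y * (2 * (Θ x * z)) + Θ y * (2 * (x * z))
              - Θ y * (2 * (Θ x * z)) := by rw [hxy]; noncomm_ring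
        _ = 2 * ((y * z) * x + (y * z) * Θ x + Θ (y * z) * x - Θ (y * z) * Θ x) := by
              rw [hxz, hΘxz, map_mul]; noncomm_ring
    · apply two_mul_cancel
      calc 2 * (2 * ((y * z) * x)) = y * (2 * (z * x)) + y * (2 * (z * x)) := by noncomm_ring
        _ = (2 * (y * x)) * z + (2 * (y * Θ x)) * z + (2 * (y * x)) * Θ z
              - (2 * (y * Θ x)) * Θ z := by rw [hzx]; noncomm_ring
        _ = 2 * (x * (y * z) + Θ x * (y * z) + x * Θ (y * z) - Θ x * Θ (y * z)) := by
              rw [hyx, hΘzx, map_mul]; noncomm_ring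
  | star y hy ihy =>
    intro x hx
    have hΘx : Θ x ∈ StarAlgebra.adjoin ℂ (a '' I) := theta_mem hΘ hx
    have hθθ : Θ (Θ x) = x := theta_sq hΘ hx
    have h2 := (ihy (star x) (star_mem hx)).2
    have h1 := (ihy (star x) (star_mem hx)).1
    rw [two_mul] at h1 h2
    simp only [map_star] at h1 h2 ⊢
    have e2 := congrArg star h2
    have e1 := congrArg star h1
    simp only [star_add, star_sub, star_mul, star_star] at e1 e2
    constructor
    · rw [two_mul]; exact e2
    · rw [two_mul]; exact e1

/-- Odd elements of the two subalgebras anticommute. -/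
lemma odd_anticomm (hCAR : IsCAR a) (hΘ : ∀ i, Θ (a i) = - a i) {I J : Set ι}
    (hdisj : Disjoint I J) {x y : A} (hx : x ∈ StarAlgebra.adjoin ℂ (a '' I))
    (hy : y ∈ StarAlgebra.adjoin ℂ (a '' J)) (hox : Θ x = -x) (hoy : Θ y = -y) :
    x * y = -(y * x) := by
  have h := (graded_comm hCAR hΘ hdisj hy x hx).1
  rw [hox, hoy] at h
  apply two_mul_cancel
  rw [h]; noncomm_ring
end Aux2
section Aux3
variable {A : Type*} [Ring A] [StarRing A] [Algebra ℂ A] [StarModule ℂ A]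

lemma IsState.map_neg {φ : A → ℂ} (h : IsState φ) (x : A) : φ (-x) = - φ x := by
  have := h.2.1 (-1) x
  simpa using this

lemma IsState.herm {φ : A → ℂ} (h : IsState φ) (x : A) :
    φ (star x) = starRingEnd ℂ (φ x) := by
  obtain ⟨hadd, hsmul, h1, hpos⟩ := h
  have him : ∀ z : A, (φ (star z * z)).im = 0 := by
    intro z
    have := hpos z
    rw [Complex.le_def] at this
    simpa using this.2.symm
  -- first expansion
  have e1 : φ (star (1 + x) * (1 + x)) = 1 + (φ x + (φ (star x) + φ (star x * x))) := by
    have hx : star (1 + x) * (1 + x) = 1 + (x + (star x + star x * x)) := by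
      simp only [star_add, star_one]; noncomm_ring
    rw [hx, hadd, hadd, hadd, h1]
  have i1 : (φ x).im + (φ (star x)).im = 0 := by
    have := congrArg Complex.im e1
    rw [him (1 + x)] at this
    simp only [Complex.add_im, Complex.one_im, him x] at this
    linarith
  -- second expansion with I • x
  have e2 : φ (star (1 + Complex.I • x) * (1 + Complex.I • x))
      = 1 + (Complex.I * φ x + (-Complex.I * φ (star x) + φ (star x * x))) := by
    have hx : star (1 + Complex.I • x) * (1 + Complex.I • x)
        = 1 + (Complex.I • x + ((-Complex.I) • star x + star x * x)) := by
      have hs : star (Complex.I • x) = (-Complex.I) • star x := by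
        rw [star_smul, Complex.star_def, Complex.conj_I]
      rw [star_add, star_one, hs]
      rw [add_mul, one_mul, mul_add, mul_one, smul_mul_smul_comm,
        neg_mul, Complex.I_mul_I, neg_neg, one_smul]
      abel
    rw [hx, hadd, hadd, hadd, h1, hsmul, hsmul]
  have i2 : (φ x).re - (φ (star x)).re = 0 := by
    have := congrArg Complex.im e2
    rw [him (1 + Complex.I • x)] at this
    simp only [Complex.add_im, Complex.one_im, Complex.mul_im, Complex.I_re, Complex.I_im,
      Complex.neg_re, Complex.neg_im, him x] at this
    linarith
  apply Complex.ext
  · simp only [Complex.conj_re]; linarith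
  · simp only [Complex.conj_im]; linarith
end Aux3
section Aux4
variable {A : Type*} [Ring A] [StarRing A] [Algebra ℂ A] [StarModule ℂ A]
variable {ι : Type*} [DecidableEq ι] {a : ι → A} {Θ : A ≃⋆ₐ[ℂ] A}

lemma odd_prod_zero (hCAR : IsCAR a) (hΘ : ∀ i, Θ (a i) = - a i) {I J : Set ι}
    (hdisj : Disjoint I J) {φ : A → ℂ} (hst : IsState φ)
    (hpr : ∀ x ∈ (StarAlgebra.adjoin ℂ (a '' I) : Set A),
      ∀ y ∈ (StarAlgebra.adjoin ℂ (a '' J) : Set A), φ (x * y) = φ x * φ y)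
    {x y : A} (hx : x ∈ StarAlgebra.adjoin ℂ (a '' I))
    (hy : y ∈ StarAlgebra.adjoin ℂ (a '' J)) (hox : Θ x = -x) (hoy : Θ y = -y) :
    φ x * φ y = 0 := by
  have hsx : star x ∈ StarAlgebra.adjoin ℂ (a '' I) := star_mem hx
  have hsy : star y ∈ StarAlgebra.adjoin ℂ (a '' J) := star_mem hy
  have hosx : Θ (star x) = -(star x) := by rw [map_star, hox, star_neg]
  have hosy : Θ (star y) = -(star y) := by rw [map_star, hoy, star_neg]
  have hac : star x * star y = -(star y * star x) :=
    odd_anticomm hCAR hΘ hdisj hsx hsy hosx hosy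
  have hA : φ (star y * star x) = starRingEnd ℂ (φ x * φ y) := by
    rw [← star_mul, hst.herm (x * y), hpr x hx y hy]
  have h2 : star y * star x = -(star x * star y) := by rw [hac, neg_neg]
  have hB : φ (star y * star x) = -(starRingEnd ℂ (φ x) * starRingEnd ℂ (φ y)) := by
    rw [h2, hst.map_neg, hpr _ hsx _ hsy, hst.herm, hst.herm]
  have hkey : starRingEnd ℂ (φ x * φ y) = - starRingEnd ℂ (φ x * φ y) := by
    calc starRingEnd ℂ (φ x * φ y) = φ (star y * star x) := hA.symm
      _ = -(starRingEnd ℂ (φ x) * starRingEnd ℂ (φ y)) := hB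
      _ = - starRingEnd ℂ (φ x * φ y) := by rw [map_mul]
  have hz : starRingEnd ℂ (φ x * φ y) = 0 :=
    add_self_eq_zero.mp (eq_neg_iff_add_eq_zero.mp hkey)
  exact (map_eq_zero _).mp hz

lemma avg_prod (hCAR : IsCAR a) (hΘ : ∀ i, Θ (a i) = - a i) {I J : Set ι}
    (hdisj : Disjoint I J) {φ : A → ℂ} (hst : IsState φ)
    (hpr : ∀ x ∈ (StarAlgebra.adjoin ℂ (a '' I) : Set A),
      ∀ y ∈ (StarAlgebra.adjoin ℂ (a '' J) : Set A), φ (x * y) = φ x * φ y)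
    {x y : A} (hx : x ∈ StarAlgebra.adjoin ℂ (a '' I))
    (hy : y ∈ StarAlgebra.adjoin ℂ (a '' J)) :
    2⁻¹ * (φ (x * y) + φ (Θ (x * y))) =
      (2⁻¹ * (φ x + φ (Θ x))) * (2⁻¹ * (φ y + φ (Θ y))) := by
  set ψ : A → ℂ := fun z => 2⁻¹ * (φ z + φ (Θ z)) with hψ
  show ψ (x * y) = ψ x * ψ y
  have ψadd : ∀ u v, ψ (u + v) = ψ u + ψ v := by
    intro u v; simp only [hψ]; rw [map_add, hst.1, hst.1]; ring
  have ψeven : ∀ u, Θ u = u → ψ u = φ u := by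
    intro u h; simp only [hψ]; rw [h]; ring
  have ψodd : ∀ u, Θ u = -u → ψ u = 0 := by
    intro u h; simp only [hψ]; rw [h, hst.map_neg]; ring
  set xp : A := (2⁻¹:ℂ) • (x + Θ x) with hxpd
  set xm : A := (2⁻¹:ℂ) • (x - Θ x) with hxmd
  set yp : A := (2⁻¹:ℂ) • (y + Θ y) with hypd
  set ym : A := (2⁻¹:ℂ) • (y - Θ y) with hymd
  have hθθx := theta_sq hΘ hx
  have hθθy := theta_sq hΘ hy
  have hxp : xp ∈ StarAlgebra.adjoin ℂ (a '' I) :=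
    (StarAlgebra.adjoin ℂ (a '' I)).smul_mem (add_mem hx (theta_mem hΘ hx)) _
  have hxm : xm ∈ StarAlgebra.adjoin ℂ (a '' I) :=
    (StarAlgebra.adjoin ℂ (a '' I)).smul_mem (sub_mem hx (theta_mem hΘ hx)) _
  have hyp : yp ∈ StarAlgebra.adjoin ℂ (a '' J) :=
    (StarAlgebra.adjoin ℂ (a '' J)).smul_mem (add_mem hy (theta_mem hΘ hy)) _
  have hym : ym ∈ StarAlgebra.adjoin ℂ (a '' J) :=
    (StarAlgebra.adjoin ℂ (a '' J)).smul_mem (sub_mem hy (theta_mem hΘ hy)) _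
  have hΘxp : Θ xp = xp := by rw [hxpd, map_smul, map_add, hθθx, add_comm]
  have hΘxm : Θ xm = -xm := by rw [hxmd, map_smul, map_sub, hθθx, ← smul_neg, neg_sub]
  have hΘyp : Θ yp = yp := by rw [hypd, map_smul, map_add, hθθy, add_comm]
  have hΘym : Θ ym = -ym := by rw [hymd, map_smul, map_sub, hθθy, ← smul_neg, neg_sub]
  have hx2 : xp + xm = x := by rw [hxpd, hxmd]; module
  have hy2 : yp + ym = y := by rw [hypd, hymd]; module
  have hsplit : x * y = xp * yp + (xp * ym + (xm * yp + xm * ym)) := by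
    rw [← hx2, ← hy2]; noncomm_ring
  have v1 : ψ (xp * yp) = φ xp * φ yp := by
    rw [ψeven _ (by rw [map_mul, hΘxp, hΘyp])]; exact hpr _ hxp _ hyp
  have v2 : ψ (xp * ym) = 0 := ψodd _ (by rw [map_mul, hΘxp, hΘym, mul_neg])
  have v3 : ψ (xm * yp) = 0 := ψodd _ (by rw [map_mul, hΘxm, hΘyp, neg_mul])
  have v4 : ψ (xm * ym) = 0 := by
    rw [ψeven _ (by rw [map_mul, hΘxm, hΘym, neg_mul_neg]), hpr _ hxm _ hym]
    exact odd_prod_zero hCAR hΘ hdisj hst hpr hxm hym hΘxm hΘym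
  have wx : ψ x = φ xp := by
    rw [← hx2, ψadd, ψeven _ hΘxp, ψodd _ hΘxm, add_zero]
  have wy : ψ y = φ yp := by
    rw [← hy2, ψadd, ψeven _ hΘyp, ψodd _ hΘym, add_zero]
  rw [hsplit, ψadd, ψadd, ψadd, v1, v2, v3, v4, wx, wy]; ring
end Aux4
/-- every even separable state for the CAR pair `(A(I), A(J))` admits a separable
decomposition into product states all of whose marginals are even. -/
theorem even_separable_has_even_decomposition
    {A : Type*} [Ring A] [StarRing A] [Algebra ℂ A] [StarModule ℂ A]
    {ι : Type*} [DecidableEq ι] (a : ι → A) (hCAR : IsCAR a)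
    (Θ : A ≃⋆ₐ[ℂ] A) (hΘ : ∀ i, Θ (a i) = - a i)
    (I J : Set ι) (hdisj : Disjoint I J)
    (ω : A → ℂ) (hω : IsState ω) (heven : ∀ x, ω (Θ x) = ω x)
    (hsep : IsSeparableState ω (StarAlgebra.adjoin ℂ (a '' I) : Set A)
      (StarAlgebra.adjoin ℂ (a '' J) : Set A)) :
    ∃ (n : ℕ) (lam : Fin n → ℝ) (φ ω₁ ω₂ : Fin n → (A → ℂ)),
      (∀ i, 0 < lam i) ∧ (∑ i, lam i = 1) ∧
      (∀ i, IsState (φ i)) ∧ (∀ i, IsState (ω₁ i)) ∧ (∀ i, IsState (ω₂ i)) ∧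
      (∀ i, ∀ x ∈ StarAlgebra.adjoin ℂ (a '' I), ∀ y ∈ StarAlgebra.adjoin ℂ (a '' J),
        φ i (x * y) = ω₁ i x * ω₂ i y) ∧
      (∀ i, ∀ x ∈ StarAlgebra.adjoin ℂ (a '' I), ω₁ i (Θ x) = ω₁ i x) ∧
      (∀ i, ∀ y ∈ StarAlgebra.adjoin ℂ (a '' J), ω₂ i (Θ y) = ω₂ i y) ∧
      (∀ x ∈ StarAlgebra.adjoin ℂ (a '' I), ∀ y ∈ StarAlgebra.adjoin ℂ (a '' J),
        ω (x * y) = ∑ i, (lam i : ℂ) * φ i (x * y)) := by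
  obtain ⟨n, lam, φ, hlam, hsum, hst, hpr, hdec⟩ := hsep
  have hstate : ∀ i, IsState (fun z => 2⁻¹ * (φ i z + φ i (Θ z))) := by
    intro i
    obtain ⟨hadd, hsmul, h1, hpos⟩ := hst i
    refine ⟨?_, ?_, ?_, ?_⟩
    · intro u v; simp only; rw [map_add, hadd, hadd]; ring
    · intro c u; simp only; rw [map_smul, hsmul, hsmul]; ring
    · simp only; rw [map_one, h1]; norm_num
    · intro u
      simp only
      have h2 : Θ (star u * u) = star (Θ u) * (Θ u) := by rw [map_mul, map_star]
      rw [h2]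
      have h05 : (0:ℂ) ≤ 2⁻¹ := by rw [Complex.le_def]; norm_num
      exact mul_nonneg h05 (add_nonneg (hpos u) (hpos (Θ u)))
  refine ⟨n, lam, (fun i z => 2⁻¹ * (φ i z + φ i (Θ z))),
    (fun i z => 2⁻¹ * (φ i z + φ i (Θ z))), (fun i z => 2⁻¹ * (φ i z + φ i (Θ z))),
    hlam, hsum, hstate, hstate, hstate, ?_, ?_, ?_, ?_⟩
  · intro i x hx y hy
    exact avg_prod hCAR hΘ hdisj (hst i) (hpr i) hx hy
  · intro i x hx
    simp only
    rw [theta_sq hΘ hx, add_comm]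
  · intro i y hy
    simp only
    rw [theta_sq hΘ hy, add_comm]
  · intro x hx y hy
    have hx' : Θ x ∈ StarAlgebra.adjoin ℂ (a '' I) := theta_mem hΘ hx
    have hy' : Θ y ∈ StarAlgebra.adjoin ℂ (a '' J) := theta_mem hΘ hy
    calc ω (x * y) = 2⁻¹ * (ω (x * y) + ω (Θ x * Θ y)) := by
          rw [show Θ x * Θ y = Θ (x * y) from (map_mul Θ x y).symm, heven]; ring
      _ = 2⁻¹ * ((∑ i, (lam i : ℂ) * φ i (x * y)) + ∑ i, (lam i : ℂ) * φ i (Θ x * Θ y)) := by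
          rw [← hdec x hx y hy, ← hdec _ hx' _ hy']
      _ = ∑ i, (lam i : ℂ) * (2⁻¹ * (φ i (x * y) + φ i (Θ (x * y)))) := by
          rw [← Finset.sum_add_distrib, Finset.mul_sum]
          exact Finset.sum_congr rfl fun i _ => by rw [map_mul]; ring
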